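/- arXiv:1802.00605 — 2 statements merged into one kernel-verified Lean document; each statement's English description precedes it below -/
import Mathlib

section
/- With Φ_m as in the three-term recurrence and Φ_{m;c} := Φ_m + c·Φ_{m−1}, for n ≥ 2 and constants s, t with t ≠ 0: Res(Φ_{n;s}, Φ_{n−1;t}) = (−1)^{n(n+1)/2} a_n^n c_n^{−n} ∏_{k=1}^n a_k^{2n−2k−1} c_k^{k−1} · t^n · Φ_{n;s}(−(c_n + b_n t + s t)/(a_n t)). -/
open Polynomial

/-- The resultant: `Res f g = lc(f)^(deg g) * ∏_{α root of f} g(α)`. -/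
noncomputable def Res (f g : Polynomial ℂ) : ℂ :=
  f.leadingCoeff ^ g.natDegree * (f.roots.map (fun a => g.eval a)).prod

/-!
Over `ℂ` the root product `Res` is the Sylvester resultant, so one may compute with its algebra:
`Res(f, g + f p) = Res(f, g)`, multiplicativity, and scaling, all with formal degrees.
Reducing `Φ_{m+1}` modulo `Φ_m` to `-c_{m+1} Φ_{m-1}` gives a recursion for `Res(Φ_{m+1}, Φ_m)`
and hence its closed form. For `F = Φ_{n;s}` and `Ψ = Φ_{n-1;t}` one has
`c_n Ψ = L Φ_{n-1} - t F` with `L = a_n t X + (c_n + b_n t + s t)`, so modulo `F`,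
`c_n^n Res(F, Ψ)` splits into `Res(F, L) = (-a_n t)^n F(root of L)` times
`Res(F, Φ_{n-1}) = Res(Φ_n, Φ_{n-1})`, the latter because `F ≡ Φ_n` modulo `Φ_{n-1}`.
-/

open Finset

theorem prod_Icc_succ_pow_mul_pow {M : Type*} [CommMonoid M] (a c : ℕ → M) (n : ℕ) :
    ∏ k ∈ Icc 1 (n + 1), a k ^ (2 * (n + 1 - k)) * c k ^ (k - 1) =
      c (n + 1) ^ n * (∏ k ∈ Icc 1 n, a k) ^ 2 *
        ∏ k ∈ Icc 1 n, a k ^ (2 * (n - k)) * c k ^ (k - 1) := by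
  have hk : ∀ k ∈ Icc 1 n, a k ^ (2 * (n + 1 - k)) * c k ^ (k - 1) =
      a k ^ 2 * (a k ^ (2 * (n - k)) * c k ^ (k - 1)) := fun k hk => by
    rw [← mul_assoc, ← pow_add, show 2 + 2 * (n - k) = 2 * (n + 1 - k) by
      have := (mem_Icc.mp hk).2; omega]
  rw [prod_Icc_succ_top (by omega), prod_congr rfl hk, prod_mul_distrib, prod_pow]
  simp only [Nat.sub_self, mul_zero, pow_zero, one_mul, Nat.add_sub_cancel]
  rw [mul_comm, ← mul_assoc]

theorem resultant_C_mul_X_add_C {K : Type*} [Field K] {f : K[X]} {m : ℕ} (hf : f.natDegree ≤ m)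
    {u : K} (hu : u ≠ 0) (v : K) :
    f.resultant (C u * X + C v) m 1 = (-u) ^ m * f.eval (-v / u) := by
  have hlin : C u * X + C v = C u * (X - C (-v / u)) ^ 1 := by
    rw [pow_one, mul_sub, ← C_mul, mul_div_cancel₀ _ hu, C_neg, sub_neg_eq_add]
  rw [hlin, resultant_C_mul_right, resultant_X_sub_C_pow_right _ _ _ _ hf, mul_one, pow_one,
    neg_pow u]
  ring

theorem prod_Icc_pow_mul_pow_eq_prod_mul {K : Type*} [Field K] {a : ℕ → K}
    (ha : ∀ k, 1 ≤ k → a k ≠ 0) (c : ℕ → K) (n : ℕ) :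
    ∏ k ∈ Icc 1 n, a k ^ (2 * (n - k)) * c k ^ (k - 1) =
      (∏ k ∈ Icc 1 n, a k) *
        ∏ k ∈ Icc 1 n, a k ^ ((2 * n : ℤ) - 2 * k - 1) * c k ^ (k - 1) := by
  rw [← prod_mul_distrib]
  refine prod_congr rfl fun k hk => ?_
  obtain ⟨hk1, hkn⟩ := mem_Icc.mp hk
  have hexp : ((2 * (n - k) : ℕ) : ℤ) = (2 * n : ℤ) - 2 * k - 1 + 1 := by omega
  rw [← mul_assoc, mul_comm (a k), ← zpow_add_one₀ (ha k hk1), ← hexp, zpow_natCast]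

theorem prod_Icc_one_ne_zero {M : Type*} [CommMonoidWithZero M] [Nontrivial M] [NoZeroDivisors M]
    {a : ℕ → M} (ha : ∀ k, 1 ≤ k → a k ≠ 0) (n : ℕ) : ∏ k ∈ Icc 1 n, a k ≠ 0 :=
  prod_ne_zero_iff.mpr fun k hk => ha k (mem_Icc.mp hk).1

structure ThreeTermRecurrence {R : Type*} [CommRing R] (a b c : ℕ → R) (Φ : ℕ → R[X]) :
    Prop where
  zero : Φ 0 = 1
  one : Φ 1 = C (a 1) * X + C (b 1)
  step : ∀ m, 2 ≤ m → Φ m = (C (a m) * X + C (b m)) * Φ (m - 1) - C (c m) * Φ (m - 2)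

namespace ThreeTermRecurrence

section CommRing

variable {R : Type*} [CommRing R] {a b c : ℕ → R} {Φ : ℕ → R[X]}

theorem succ_succ (hΦ : ThreeTermRecurrence a b c Φ) (m : ℕ) :
    Φ (m + 2) = (C (a (m + 2)) * X + C (b (m + 2))) * Φ (m + 1) - C (c (m + 2)) * Φ m :=
  hΦ.step (m + 2) le_add_self

theorem natDegree_le (hΦ : ThreeTermRecurrence a b c Φ) (m : ℕ) : (Φ m).natDegree ≤ m := by
  induction m using Nat.twoStepInduction with
  | zero => simp [hΦ.zero]
  | one => rw [hΦ.one]; exact natDegree_linear_le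
  | more m ih₀ ih₁ =>
    rw [hΦ.succ_succ]
    refine (natDegree_sub_le_of_le (natDegree_mul_le_of_le natDegree_linear_le ih₁)
      ((natDegree_C_mul_le _ _).trans ih₀)).trans ?_
    omega

theorem coeff_self (hΦ : ThreeTermRecurrence a b c Φ) (m : ℕ) :
    (Φ m).coeff m = ∏ k ∈ Icc 1 m, a k := by
  induction m using Nat.twoStepInduction with
  | zero => simp [hΦ.zero]
  | one => simp [hΦ.one]
  | more m _ ih₁ =>
    have h₀ : (Φ m).coeff (m + 2) = 0 := coeff_eq_zero_of_natDegree_lt <| by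
      have := hΦ.natDegree_le m; omega
    have h₁ : (Φ (m + 1)).coeff (m + 2) = 0 := coeff_eq_zero_of_natDegree_lt <| by
      have := hΦ.natDegree_le (m + 1); omega
    rw [hΦ.succ_succ, prod_Icc_succ_top (by omega), ← ih₁, coeff_sub, add_mul, coeff_add,
      mul_assoc, coeff_C_mul, coeff_X_mul, coeff_C_mul, coeff_C_mul, h₀, h₁]
    ring

theorem natDegree_add_C_mul_le (hΦ : ThreeTermRecurrence a b c Φ) (m : ℕ) (s : R) :
    (Φ (m + 1) + C s * Φ m).natDegree ≤ m + 1 :=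
  natDegree_add_le_of_degree_le (hΦ.natDegree_le _)
    ((natDegree_C_mul_le _ _).trans ((hΦ.natDegree_le m).trans m.le_succ))

theorem coeff_add_C_mul (hΦ : ThreeTermRecurrence a b c Φ) (m : ℕ) (s : R) :
    (Φ (m + 1) + C s * Φ m).coeff (m + 1) = ∏ k ∈ Icc 1 (m + 1), a k := by
  rw [coeff_add, coeff_C_mul, hΦ.coeff_self,
    coeff_eq_zero_of_natDegree_lt ((hΦ.natDegree_le m).trans_lt m.lt_succ_self), mul_zero,
    add_zero]

theorem resultant_succ_succ (hΦ : ThreeTermRecurrence a b c Φ) (m : ℕ) :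
    resultant (Φ (m + 2)) (Φ (m + 1)) (m + 2) (m + 1) =
      (-c (m + 2)) ^ (m + 1) * (∏ k ∈ Icc 1 (m + 1), a k) ^ 2 *
        resultant (Φ (m + 1)) (Φ m) (m + 1) m := by
  have hsign : (-1 : R) ^ ((m + 2) * (m + 1)) = 1 :=
    (mul_comm (m + 1) (m + 2) ▸ Nat.even_mul_succ_self (m + 1)).neg_one_pow
  have hΦ₂ : Φ (m + 2) =
      C (-c (m + 2)) * Φ m + Φ (m + 1) * (C (a (m + 2)) * X + C (b (m + 2))) := by
    rw [hΦ.succ_succ, C_neg]; ring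
  have hdeg : (C (a (m + 2)) * X + C (b (m + 2))).natDegree + (m + 1) ≤ m + 2 := by
    linarith [natDegree_linear_le (a := a (m + 2)) (b := b (m + 2))]
  rw [resultant_comm, hsign, one_mul, hΦ₂,
    resultant_add_mul_right _ _ _ _ _ hdeg (hΦ.natDegree_le _), resultant_C_mul_right,
    resultant_add_right_deg _ _ _ _ _ (hΦ.natDegree_le m), hΦ.coeff_self, mul_assoc]

theorem resultant_succ (hΦ : ThreeTermRecurrence a b c Φ) (m : ℕ) :
    resultant (Φ (m + 1)) (Φ m) (m + 1) m =
      (-1) ^ ((m + 1) * m / 2) *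
        ∏ k ∈ Icc 1 (m + 1), a k ^ (2 * (m + 1 - k)) * c k ^ (k - 1) := by
  induction m with
  | zero => rw [hΦ.zero, ← C_1, resultant_C_right]; simp
  | succ m ih =>
    have hexp : (m + 2) * (m + 1) / 2 = (m + 1) * m / 2 + (m + 1) := by
      rw [show (m + 2) * (m + 1) = (m + 1) * m + 2 * (m + 1) by ring,
        Nat.add_mul_div_left _ _ two_pos]
    rw [hΦ.resultant_succ_succ, ih, prod_Icc_succ_pow_mul_pow a c (m + 1), hexp, pow_add,
      neg_pow (c (m + 2))]
    ring

end CommRing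

section IsDomain

variable {R : Type*} [CommRing R] [IsDomain R] {a b c : ℕ → R} {Φ : ℕ → R[X]}

theorem natDegree_eq (hΦ : ThreeTermRecurrence a b c Φ) (ha : ∀ k, 1 ≤ k → a k ≠ 0)
    (m : ℕ) : (Φ m).natDegree = m :=
  natDegree_eq_of_le_of_coeff_ne_zero (hΦ.natDegree_le m) <| by
    rw [hΦ.coeff_self]
    exact prod_Icc_one_ne_zero ha m

theorem natDegree_add_C_mul (hΦ : ThreeTermRecurrence a b c Φ) (ha : ∀ k, 1 ≤ k → a k ≠ 0)
    (m : ℕ) (s : R) : (Φ (m + 1) + C s * Φ m).natDegree = m + 1 :=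
  natDegree_eq_of_le_of_coeff_ne_zero (hΦ.natDegree_add_C_mul_le m s) <| by
    rw [hΦ.coeff_add_C_mul]
    exact prod_Icc_one_ne_zero ha (m + 1)

end IsDomain

section Field

variable {K : Type*} [Field K] {a b c : ℕ → K} {Φ : ℕ → K[X]}

theorem resultant_add_C_mul (hΦ : ThreeTermRecurrence a b c Φ) (ha : ∀ k, 1 ≤ k → a k ≠ 0)
    (m : ℕ) (s : K) {t : K} (ht : t ≠ 0) :
    (∏ k ∈ Icc 1 (m + 2), a k) * c (m + 2) ^ (m + 2) *
        resultant (Φ (m + 2) + C s * Φ (m + 1)) (Φ (m + 1) + C t * Φ m) (m + 2) (m + 1) =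
      (-(a (m + 2) * t)) ^ (m + 2) *
        (Φ (m + 2) + C s * Φ (m + 1)).eval
          (-(c (m + 2) + b (m + 2) * t + s * t) / (a (m + 2) * t)) *
        resultant (Φ (m + 2)) (Φ (m + 1)) (m + 2) (m + 1) := by
  set F := Φ (m + 2) + C s * Φ (m + 1) with hF
  set L := C (a (m + 2) * t) * X + C (c (m + 2) + b (m + 2) * t + s * t)
  have hFdeg : F.natDegree ≤ m + 2 := hΦ.natDegree_add_C_mul_le (m + 1) s
  have hat : a (m + 2) * t ≠ 0 := mul_ne_zero (ha _ (by omega)) ht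
  have hLdeg : L.natDegree = 1 := natDegree_linear hat
  have hΨ : C (c (m + 2)) * (Φ (m + 1) + C t * Φ m) = L * Φ (m + 1) + F * C (-t) := by
    rw [hF, hΦ.succ_succ]; simp only [L, C_add, C_mul, C_neg]; ring
  calc (∏ k ∈ Icc 1 (m + 2), a k) * c (m + 2) ^ (m + 2) *
        resultant F (Φ (m + 1) + C t * Φ m) (m + 2) (m + 1)
      = resultant F (C (c (m + 2)) * (Φ (m + 1) + C t * Φ m)) (m + 2) (m + 1 + 1) := by
        rw [resultant_C_mul_right,
          resultant_add_right_deg _ _ _ _ _ (hΦ.natDegree_add_C_mul_le m t), hΦ.coeff_add_C_mul]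
        ring
    _ = resultant F L (m + 2) * resultant F (Φ (m + 1)) (m + 2) := by
        rw [hΨ, resultant_add_mul_right _ _ _ _ _ (by simp) hFdeg,
          ← resultant_mul_right _ _ _ _ hFdeg, hLdeg, hΦ.natDegree_eq ha]
        ring_nf
    _ = _ := by
        rw [hLdeg, hΦ.natDegree_eq ha, resultant_C_mul_X_add_C hFdeg hat, hF,
          ← mul_comm (Φ (m + 1)),
          resultant_add_mul_left _ _ _ _ _ (by simp) (hΦ.natDegree_le _)]

end Field

end ThreeTermRecurrence

theorem Res_eq_resultant (f g : ℂ[X]) : Res f g = f.resultant g :=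
  (resultant_eq_prod_eval f g _ le_rfl (IsAlgClosed.splits f)).symm

theorem stmt_7 (a b c : ℕ → ℂ) (Φ : ℕ → Polynomial ℂ)
    (habc : ∀ k, 1 ≤ k → a k ≠ 0 ∧ c k ≠ 0)
    (h0 : Φ 0 = 1) (h1 : Φ 1 = C (a 1) * X + C (b 1))
    (hrec : ∀ m, 2 ≤ m →
      Φ m = (C (a m) * X + C (b m)) * Φ (m - 1) - C (c m) * Φ (m - 2))
    (n : ℕ) (hn : 2 ≤ n) (s t : ℂ) (ht : t ≠ 0) :
    Res (Φ n + C s * Φ (n - 1)) (Φ (n - 1) + C t * Φ (n - 2)) =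
      (-1) ^ (n * (n + 1) / 2) * a n ^ n * (c n)⁻¹ ^ n *
        (∏ k ∈ Finset.Icc 1 n, a k ^ ((2 * n : ℤ) - 2 * k - 1) * c k ^ (k - 1)) *
        t ^ n *
        (Φ n + C s * Φ (n - 1)).eval (-(c n + b n * t + s * t) / (a n * t)) := by
  obtain ⟨m, rfl⟩ : ∃ m, n = m + 2 := ⟨n - 2, by omega⟩
  have hΦ : ThreeTermRecurrence a b c Φ := ⟨h0, h1, hrec⟩
  have ha : ∀ k, 1 ≤ k → a k ≠ 0 := fun k hk => (habc k hk).1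
  have hc : c (m + 2) ≠ 0 := (habc _ (by omega)).2
  have key := hΦ.resultant_add_C_mul ha m s ht
  rw [hΦ.resultant_succ (m + 1), prod_Icc_pow_mul_pow_eq_prod_mul ha] at key
  have hexp : (m + 2) * (m + 2 + 1) / 2 = (m + 2) * (m + 1) / 2 + (m + 2) := by
    rw [show (m + 2) * (m + 2 + 1) = (m + 2) * (m + 1) + 2 * (m + 2) by ring,
      Nat.add_mul_div_left _ _ two_pos]
  simp only [show m + 2 - 1 = m + 1 from rfl, show m + 2 - 2 = m from rfl]
  rw [Res_eq_resultant, hΦ.natDegree_add_C_mul ha, hΦ.natDegree_add_C_mul ha,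
    ← mul_right_inj' (mul_ne_zero (prod_Icc_one_ne_zero ha _) (pow_ne_zero (m + 2) hc)), key,
    hexp, pow_add, neg_pow, mul_pow, inv_pow]
  field_simp
  ring
end

section
/- Let H_{n;c}(x) = H_n(x) + c·H_{n−1}(x) with H_m the Hermite polynomial. For c ≠ 0: disc(H_{n;c}) = 2^{n(3n−5)/2} · ∏_{k=1}^{n−1} k^k · (−c)^n · H_{n;c}(−(c² + 2n)/(2c)). -/
open Polynomial

/-- The discriminant of a polynomial. -/
noncomputable def disc (f : Polynomial ℂ) : ℂ :=
  (-1) ^ (f.natDegree * (f.natDegree - 1) / 2) / f.leadingCoeff * Res f (derivative f)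

/-- The physicists' Hermite polynomials. -/
noncomputable def H : ℕ → Polynomial ℂ
  | 0 => 1
  | 1 => 2 * X
  | (n + 2) => 2 * X * H (n + 1) - C (2 * (n + 1 : ℂ)) * H n

/-!
Write `f = H n + c H (n-1)`. The recurrence and `H m' = 2m H (m-1)` give
`f' = (2c x + c² + 2n) H (n-1) - c f`, so at every root `a` of `f` we have
`f'(a) = 2c (a - x₀) H (n-1)(a)` with `x₀ = -(c² + 2n) / (2c)`. Hence `Res f f'` splits into
`∏ (a - x₀)`, which is `f(x₀)` up to sign and leading coefficient, and `Res f (H (n-1))`.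
Swapping the resultant, the latter is a product of values of `f` at the roots of `H (n-1)`,
where `f` agrees with `H n = -2(n-1) H (n-2)`; iterating gives `∏_{k<n} (-2k)^k`.
-/

noncomputable def rootProd (p q : ℂ[X]) : ℂ :=
  (p.roots.map fun a => q.eval a).prod

lemma Res_eq_leadingCoeff_pow_mul_rootProd (p q : ℂ[X]) :
    Res p q = p.leadingCoeff ^ q.natDegree * rootProd p q := rfl

lemma rootProd_congr {p q r : ℂ[X]} (h : ∀ a ∈ p.roots, q.eval a = r.eval a) :
    rootProd p q = rootProd p r :=
  congrArg Multiset.prod (Multiset.map_congr rfl h)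

lemma rootProd_mul (p q r : ℂ[X]) : rootProd p (q * r) = rootProd p q * rootProd p r := by
  simp only [rootProd, eval_mul, Multiset.prod_map_mul]

lemma rootProd_C (p : ℂ[X]) (k : ℂ) : rootProd p (C k) = k ^ p.natDegree := by
  simp [rootProd, IsAlgClosed.card_roots_eq_natDegree]

lemma leadingCoeff_mul_rootProd_X_sub_C (p : ℂ[X]) (x : ℂ) :
    p.leadingCoeff * rootProd p (X - C x) = (-1) ^ p.natDegree * p.eval x := by
  have hneg : (p.roots.map fun a => a - x) = (p.roots.map fun a => x - a).map Neg.neg := by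
    simp only [Multiset.map_map, Function.comp_def, neg_sub]
  rw [(IsAlgClosed.splits p).eval_eq_prod_roots, rootProd]
  simp only [eval_sub, eval_X, eval_C]
  rw [hneg, Multiset.prod_map_neg, Multiset.card_map, IsAlgClosed.card_roots_eq_natDegree]
  ring

lemma Res_eq_prod_prod_sub (p q : ℂ[X]) :
    Res p q = p.leadingCoeff ^ q.natDegree * q.leadingCoeff ^ p.natDegree *
      (p.roots.map fun a => (q.roots.map fun b => a - b).prod).prod := by
  rw [Res_eq_leadingCoeff_pow_mul_rootProd, rootProd,
    Multiset.map_congr rfl fun a _ => (IsAlgClosed.splits q).eval_eq_prod_roots a,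
    Multiset.prod_map_mul, Multiset.map_const', Multiset.prod_replicate,
    IsAlgClosed.card_roots_eq_natDegree, mul_assoc]

lemma Res_comm (p q : ℂ[X]) :
    Res p q = (-1) ^ (p.natDegree * q.natDegree) * Res q p := by
  have hswap : ∀ b ∈ q.roots, (p.roots.map fun a => a - b).prod =
      (-1) ^ p.natDegree * (p.roots.map fun a => b - a).prod := by
    intro b _
    rw [← IsAlgClosed.card_roots_eq_natDegree (p := p), ← Multiset.card_map (fun a => b - a),
      ← Multiset.prod_map_neg, Multiset.map_map]
    simp only [Function.comp_def, neg_sub]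
  rw [Res_eq_prod_prod_sub, Res_eq_prod_prod_sub, Multiset.prod_map_prod_map,
    Multiset.map_congr rfl hswap, Multiset.prod_map_mul, Multiset.map_const',
    Multiset.prod_replicate, IsAlgClosed.card_roots_eq_natDegree, ← pow_mul]
  ring

lemma rootProd_comm_of_natDegree_eq_succ {p q : ℂ[X]} (hd : p.natDegree = q.natDegree + 1)
    (hlc : p.leadingCoeff ^ q.natDegree = q.leadingCoeff ^ p.natDegree) :
    rootProd p q = rootProd q p := by
  have hp : p.leadingCoeff ^ q.natDegree ≠ 0 :=
    pow_ne_zero _ (leadingCoeff_ne_zero.mpr (ne_zero_of_natDegree_gt (n := 0) (by omega)))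
  have hsign : (-1 : ℂ) ^ (p.natDegree * q.natDegree) = 1 := by
    rw [hd, mul_comm]
    exact (Nat.even_mul_succ_self _).neg_one_pow
  have := Res_comm p q
  rw [hsign, one_mul, Res_eq_leadingCoeff_pow_mul_rootProd,
    Res_eq_leadingCoeff_pow_mul_rootProd, ← hlc] at this
  exact mul_left_cancel₀ hp this

lemma H_add_two (k : ℕ) : H (k + 2) = 2 * X * H (k + 1) - C (2 * (k + 1 : ℂ)) * H k := rfl

lemma natDegree_H_and_leadingCoeff_H (n : ℕ) :
    (H n).natDegree = n ∧ (H n).leadingCoeff = 2 ^ n := by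
  induction n using H.induct with
  | case1 => simp [H]
  | case2 => simp [H, ← C_ofNat]
  | case3 k ih₁ ih₀ =>
    have hH : H (k + 1) ≠ 0 := by
      intro h; simp [h] at ih₁
    have hdeg : (2 * X * H (k + 1)).natDegree = k + 2 := by
      rw [← C_ofNat, mul_assoc, natDegree_C_mul two_ne_zero, natDegree_X_mul hH, ih₁.1]
    have hlt : (C (2 * (k + 1 : ℂ)) * H k).natDegree < (2 * X * H (k + 1)).natDegree := by
      rw [hdeg]
      exact (natDegree_C_mul_le _ _).trans_lt (by omega)
    rw [H_add_two, natDegree_sub_eq_left_of_natDegree_lt hlt, hdeg,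
      leadingCoeff_sub_of_degree_lt (degree_lt_degree hlt)]
    refine ⟨rfl, ?_⟩
    rw [← C_ofNat, leadingCoeff_mul, leadingCoeff_mul, leadingCoeff_C, leadingCoeff_X, ih₁.2,
      mul_one, ← pow_succ']

lemma H_succ (k : ℕ) : H (k + 1) = 2 * X * H k - C (2 * k : ℂ) * H (k - 1) := by
  cases k with
  | zero => simp [H]
  | succ k => rw [H, Nat.add_sub_cancel]; push_cast; rfl

lemma derivative_H (n : ℕ) : derivative (H n) = C (2 * n : ℂ) * H (n - 1) := by
  induction n using H.induct with
  | case1 => simp [H]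
  | case2 => simp [H, ← C_ofNat]
  | case3 k ih₁ ih₀ =>
    show derivative (H (k + 2)) = C (2 * ((k + 2 : ℕ) : ℂ)) * H (k + 1)
    rw [H_add_two, derivative_sub, derivative_mul, derivative_C_mul, ih₁, ih₀,
      Nat.add_sub_cancel, H_succ k]
    simp only [derivative_mul, derivative_C, derivative_X, ← C_ofNat]
    push_cast
    simp only [map_add, map_mul, map_natCast, map_one, map_ofNat]
    ring

lemma natDegree_H (n : ℕ) : (H n).natDegree = n := (natDegree_H_and_leadingCoeff_H n).1

lemma leadingCoeff_H (n : ℕ) : (H n).leadingCoeff = 2 ^ n := (natDegree_H_and_leadingCoeff_H n).2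

lemma eval_H_add_two_of_isRoot {k : ℕ} {b : ℂ} (hb : (H (k + 1)).IsRoot b) :
    (H (k + 2)).eval b = (C (-(2 * (k + 1) : ℂ)) * H k).eval b := by
  simp [H_add_two, hb.eq_zero]

lemma rootProd_comm_H_succ {m : ℕ} {p : ℂ[X]} (hd : p.natDegree = m + 2)
    (hlc : p.leadingCoeff = 2 ^ (m + 2)) : rootProd p (H (m + 1)) = rootProd (H (m + 1)) p :=
  rootProd_comm_of_natDegree_eq_succ (by rw [hd, natDegree_H])
    (by rw [hd, hlc, natDegree_H, leadingCoeff_H, ← pow_mul, ← pow_mul, mul_comm])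

lemma rootProd_H_succ_H (m : ℕ) :
    rootProd (H (m + 1)) (H m) = ∏ k ∈ Finset.Icc 1 m, (-(2 * k : ℂ)) ^ k := by
  induction m with
  | zero => rw [show H 0 = C 1 from C_1.symm, rootProd_C, one_pow]; rfl
  | succ m ih =>
    rw [rootProd_comm_H_succ (natDegree_H _) (leadingCoeff_H _),
      rootProd_congr fun b hb => eval_H_add_two_of_isRoot (isRoot_of_mem_roots hb),
      rootProd_mul, rootProd_C, ih, natDegree_H, Finset.prod_Icc_succ_top (by omega)]
    push_cast
    ring

lemma sum_Icc_id_mul_two (m : ℕ) : (∑ k ∈ Finset.Icc 1 m, k) * 2 = m * (m + 1) := by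
  induction m with
  | zero => rfl
  | succ m ih => rw [Finset.sum_Icc_succ_top (by omega), add_mul, ih]; ring

lemma prod_Icc_neg_two_mul_pow (m : ℕ) :
    ∏ k ∈ Finset.Icc 1 m, (-(2 * k : ℂ)) ^ k =
      (-2) ^ (∑ k ∈ Finset.Icc 1 m, k) * ∏ k ∈ Finset.Icc 1 m, (k : ℂ) ^ k := by
  rw [← Finset.prod_pow_eq_pow_sum, ← Finset.prod_mul_distrib]
  exact Finset.prod_congr rfl fun k _ => by rw [← mul_pow, neg_mul]

lemma mul_sub_one_div_two_eq_sum_Icc (m : ℕ) :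
    (m + 2) * (m + 2 - 1) / 2 = ∑ k ∈ Finset.Icc 1 (m + 1), k := by
  rw [show m + 2 - 1 = m + 1 from rfl, mul_comm, ← sum_Icc_id_mul_two,
    Nat.mul_div_cancel _ two_pos]

lemma mul_three_mul_sub_five_div_two_eq (m : ℕ) :
    (m + 2) * (3 * (m + 2) - 5) / 2 = (m + 2) * m + ∑ k ∈ Finset.Icc 1 (m + 1), k := by
  have hS := sum_Icc_id_mul_two (m + 1)
  rw [show 3 * (m + 2) - 5 = 3 * m + 1 by omega]
  exact Nat.div_eq_of_eq_mul_left two_pos (by linarith)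

section Perturbed

variable (m : ℕ) (c : ℂ)

lemma natDegree_H_add_C_mul_H_and_leadingCoeff :
    (H (m + 2) + C c * H (m + 1)).natDegree = m + 2 ∧
      (H (m + 2) + C c * H (m + 1)).leadingCoeff = 2 ^ (m + 2) := by
  have hlt : (C c * H (m + 1)).natDegree < (H (m + 2)).natDegree := by
    rw [natDegree_H]
    exact (natDegree_C_mul_le _ _).trans_lt (by rw [natDegree_H]; omega)
  rw [natDegree_add_eq_left_of_natDegree_lt hlt,
    leadingCoeff_add_of_degree_lt' (degree_lt_degree hlt), natDegree_H, leadingCoeff_H]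
  exact ⟨rfl, rfl⟩

lemma derivative_H_add_C_mul_H :
    derivative (H (m + 2) + C c * H (m + 1)) =
      (C (2 * c) * X + C (c ^ 2 + 2 * (m + 2))) * H (m + 1) -
        C c * (H (m + 2) + C c * H (m + 1)) := by
  rw [derivative_add, derivative_C_mul, derivative_H, derivative_H, H_add_two]
  simp only [Nat.add_sub_cancel, ← C_ofNat]
  push_cast
  simp only [map_add, map_mul, map_pow, map_natCast, map_one, map_ofNat]
  ring

lemma rootProd_H_add_C_mul_H_H :
    rootProd (H (m + 2) + C c * H (m + 1)) (H (m + 1)) =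
      ∏ k ∈ Finset.Icc 1 (m + 1), (-(2 * k : ℂ)) ^ k := by
  obtain ⟨hd, hlc⟩ := natDegree_H_add_C_mul_H_and_leadingCoeff m c
  rw [rootProd_comm_H_succ hd hlc, ← rootProd_H_succ_H (m + 1),
    rootProd_comm_H_succ (natDegree_H _) (leadingCoeff_H _)]
  exact rootProd_congr fun b hb => by simp [(isRoot_of_mem_roots hb).eq_zero]

lemma rootProd_derivative_H_add_C_mul_H (hc : c ≠ 0) :
    rootProd (H (m + 2) + C c * H (m + 1)) (derivative (H (m + 2) + C c * H (m + 1))) =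
      (2 * c) ^ (m + 2) *
        rootProd (H (m + 2) + C c * H (m + 1)) (X - C (-(c ^ 2 + 2 * (m + 2)) / (2 * c))) *
        rootProd (H (m + 2) + C c * H (m + 1)) (H (m + 1)) := by
  have hroot : ∀ a ∈ (H (m + 2) + C c * H (m + 1)).roots,
      (derivative (H (m + 2) + C c * H (m + 1))).eval a =
        (C (2 * c) * (X - C (-(c ^ 2 + 2 * (m + 2)) / (2 * c))) * H (m + 1)).eval a := by
    intro a ha
    rw [derivative_H_add_C_mul_H]
    simp only [eval_sub, eval_mul, eval_add, eval_C, eval_X, (isRoot_of_mem_roots ha).eq_zero]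
    field_simp
    ring
  rw [rootProd_congr hroot, rootProd_mul, rootProd_mul, rootProd_C,
    (natDegree_H_add_C_mul_H_and_leadingCoeff m c).1]

end Perturbed

theorem stmt_12 (n : ℕ) (hn : 2 ≤ n) (c : ℂ) (hc : c ≠ 0) :
    disc (H n + C c * H (n - 1)) =
      2 ^ (n * (3 * n - 5) / 2) * (∏ k ∈ Finset.Icc 1 (n - 1), (k : ℂ) ^ k) *
        (-c) ^ n *
        (H n + C c * H (n - 1)).eval (-(c ^ 2 + 2 * n) / (2 * c)) := by
  obtain ⟨m, rfl⟩ : ∃ m, n = m + 2 := ⟨n - 2, by omega⟩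
  obtain ⟨hd, hlc⟩ := natDegree_H_add_C_mul_H_and_leadingCoeff m c
  have hX := leadingCoeff_mul_rootProd_X_sub_C (H (m + 2) + C c * H (m + 1))
    (-(c ^ 2 + 2 * (m + 2)) / (2 * c))
  rw [hd, hlc] at hX
  rw [show m + 2 - 1 = m + 1 from rfl, disc, Res_eq_leadingCoeff_pow_mul_rootProd,
    natDegree_derivative, rootProd_derivative_H_add_C_mul_H m c hc, rootProd_H_add_C_mul_H_H,
    prod_Icc_neg_two_mul_pow, hd, hlc, mul_sub_one_div_two_eq_sum_Icc,
    mul_three_mul_sub_five_div_two_eq]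
  push_cast
  generalize ∑ k ∈ Finset.Icc 1 (m + 1), k = S
  generalize rootProd _ _ = R at hX ⊢
  generalize (H (m + 2) + C c * H (m + 1)).eval _ = F at hX ⊢
  generalize ∏ k ∈ Finset.Icc 1 (m + 1), (k : ℂ) ^ k = P
  have hsign_sq : (-1 : ℂ) ^ S * (-1) ^ S = 1 := by
    rw [← pow_add, Even.neg_one_pow ⟨S, rfl⟩]
  rw [div_mul_eq_mul_div, div_eq_iff (pow_ne_zero _ two_ne_zero), ← pow_mul, neg_pow (2 : ℂ),
    neg_pow c]
  linear_combination
    (2 ^ ((m + 2) * (m + 1)) * 2 ^ S * 2 ^ (m + 2) * c ^ (m + 2) * P * R) * hsign_sq +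
      (2 ^ ((m + 2) * m) * 2 ^ S * 2 ^ (m + 2) * c ^ (m + 2) * P) * hX
end
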